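/- arXiv:1705.00159 — 4 statements merged into one kernel-verified Lean document; each statement's English description precedes it below -/
import Mathlib

section
/- Let S be a compact right-topological semigroup (multiplication is continuous in the left argument, i.e. for each s the map x ↦ x·s is continuous), and let M be a minimal left ideal of S. Then for every h ∈ M there exists a unique idempotent u ∈ M such that hM = uM. -/
def IsLeftIdeal {S : Type*} [Semigroup S] (I : Set S) : Prop :=
  I.Nonempty ∧ ∀ s : S, ∀ i ∈ I, s * i ∈ I

def IsMinimalLeftIdeal {S : Type*} [Semigroup S] (I : Set S) : Prop :=
  IsLeftIdeal I ∧ ∀ J ⊆ I, IsLeftIdeal J → J = I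

theorem stmt0 {S : Type*} [Semigroup S] [TopologicalSpace S] [CompactSpace S] [T2Space S]
    (hcont : ∀ s : S, Continuous fun x : S => x * s)
    (M : Set S) (hM : IsMinimalLeftIdeal M) (h : S) (hh : h ∈ M) :
    ∃! u : S, u ∈ M ∧ u * u = u ∧
      (fun x : S => h * x) '' M = (fun x : S => u * x) '' M := by
  obtain ⟨⟨⟨m0, hm0⟩, hIdeal⟩, hmin⟩ := hM
  have hMS : ∀ x ∈ M, ∀ y ∈ M, x * y ∈ M := fun x hx y hy => hIdeal x y hy
  have hSh : (fun x : S => x * h) '' Set.univ = M := by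
    apply hmin
    · rintro _ ⟨x, -, rfl⟩; exact hIdeal x h hh
    · refine ⟨⟨m0 * h, ⟨m0, trivial, rfl⟩⟩, ?_⟩
      rintro s _ ⟨x, -, rfl⟩
      exact ⟨s * x, trivial, by simp only [mul_assoc]⟩
  have hMcompact : IsCompact M := by
    rw [← hSh]; exact isCompact_univ.image (hcont h)
  obtain ⟨e, heM, hee⟩ :=
    exists_idempotent_in_compact_subsemigroup hcont M ⟨m0, hm0⟩ hMcompact hMS
  -- every idempotent in M is a right identity on M
  have rightId : ∀ v : S, v ∈ M → v * v = v → ∀ x ∈ M, x * v = x := by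
    intro v hv hvv
    have hJ : {x ∈ M | x * v = x} = M := by
      apply hmin
      · exact fun x hx => hx.1
      · refine ⟨⟨v, hv, hvv⟩, ?_⟩
        rintro s i ⟨hiM, hiv⟩
        exact ⟨hIdeal s i hiM, by rw [mul_assoc, hiv]⟩
    intro x hx
    rw [← hJ] at hx
    exact hx.2
  -- M * h = M, so there is y ∈ M with y * h = e
  have hMh : {z | ∃ m ∈ M, m * h = z} = M := by
    apply hmin
    · rintro _ ⟨m, hm, rfl⟩; exact hMS m hm h hh
    · refine ⟨⟨m0 * h, m0, hm0, rfl⟩, ?_⟩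
      rintro s i ⟨m, hm, hmh⟩
      exact ⟨s * m, hIdeal s m hm, by rw [mul_assoc, hmh]⟩
  obtain ⟨y, hy, hyh⟩ : ∃ m ∈ M, m * h = e := by rw [← hMh] at heM; exact heM
  have huM : h * y ∈ M := hMS h hh y hy
  have huh : (h * y) * h = h := by
    rw [mul_assoc, hyh]
    exact rightId e heM hee h hh
  have huu : (h * y) * (h * y) = h * y := by
    rw [← mul_assoc, huh]
  have himg : (fun x : S => h * x) '' M = (fun x : S => (h * y) * x) '' M := by
    apply Set.Subset.antisymm
    · rintro _ ⟨m, hm, rfl⟩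
      exact ⟨h * m, hMS h hh m hm, by simp only; rw [mul_assoc, ← mul_assoc y, hyh,
        ← mul_assoc, rightId e heM hee h hh]⟩
    · rintro _ ⟨m, hm, rfl⟩
      exact ⟨y * m, hMS y hy m hm, by simp only; rw [mul_assoc]⟩
  refine ⟨h * y, ⟨huM, huu, himg⟩, ?_⟩
  rintro v ⟨hvM, hvv, hvimg⟩
  have himg2 : (fun x : S => (h * y) * x) '' M = (fun x : S => v * x) '' M := by
    rw [← himg, hvimg]
  have hmem : h * y ∈ (fun x : S => v * x) '' M := by
    rw [← himg2]
    exact ⟨h * y, huM, huu⟩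
  obtain ⟨m, hm, hvm⟩ := hmem
  have h1 : v * (h * y) = h * y := by
    simp only at hvm
    rw [← hvm, ← mul_assoc, hvv]
  have h2 : v * (h * y) = v := rightId (h * y) huM huu v hvM
  rw [h1] at h2
  exact h2.symm
end

section
/- Let S be a compact right-topological semigroup of functions from a set X to itself (a closed subsemigroup of X^X under composition, X compact Hausdorff), let M be a minimal left ideal of S, and let η ∈ S. Then there exists an idempotent u ∈ M such that the range of u is contained in the range of η. -/
/-- `I` is a left ideal of the semigroup of self-maps `S` (under composition). -/
def IsLeftIdealIn {α : Type*} (S I : Set (α → α)) : Prop :=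
  I.Nonempty ∧ I ⊆ S ∧ ∀ s ∈ S, ∀ i ∈ I, s ∘ i ∈ I

def IsMinimalLeftIdealIn {α : Type*} (S I : Set (α → α)) : Prop :=
  IsLeftIdealIn S I ∧ ∀ J ⊆ I, IsLeftIdealIn S J → J = I

theorem stmt7 {X : Type*} [TopologicalSpace X] [CompactSpace X] [T2Space X]
    (S : Set (X → X)) (hScl : IsClosed S) (hSne : S.Nonempty)
    (hScomp : ∀ f ∈ S, ∀ g ∈ S, f ∘ g ∈ S)
    (M : Set (X → X)) (hM : IsMinimalLeftIdealIn S M)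
    (η : X → X) (hη : η ∈ S) :
    ∃ u ∈ M, u ∘ u = u ∧ Set.range u ⊆ Set.range η := by
  obtain ⟨⟨hMne, hMS, hMabs⟩, hMin⟩ := hM
  obtain ⟨m0, hm0⟩ := hMne
  set h : X → X := η ∘ m0 with hh_def
  have hhM : h ∈ M := hMabs η hη m0 hm0
  have hhS : h ∈ S := hMS hhM
  -- M = S ∘ h
  have hJ : (fun s => s ∘ h) '' S = M := by
    apply hMin
    · rintro _ ⟨s, hs, rfl⟩
      exact hMabs s hs h hhM
    · refine ⟨⟨_, ⟨η, hη, rfl⟩⟩, ?_, ?_⟩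
      · rintro _ ⟨s, hs, rfl⟩
        exact hScomp s hs h hhS
      · rintro s hs _ ⟨t, ht, rfl⟩
        exact ⟨s ∘ t, hScomp s hs t ht, rfl⟩
  -- M is compact
  have hcont : Continuous fun t : X → X => t ∘ h :=
    continuous_pi fun x => continuous_apply (h x)
  have hMcomp : IsCompact M := by
    rw [← hJ]
    exact (hScl.isCompact).image hcont
  -- Ellis: idempotent in M
  letI : Semigroup (X → X) :=
    { mul := fun f g => f ∘ g, mul_assoc := fun _ _ _ => rfl }
  have hmulcont : ∀ r : X → X, Continuous (· * r) := fun r =>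
    continuous_pi fun x => continuous_apply (r x)
  obtain ⟨e, heM, hee⟩ :=
    exists_idempotent_in_compact_subsemigroup hmulcont M ⟨h, hhM⟩ hMcomp
      (fun x hx y hy => hMabs x (hMS hx) y hy)
  have hee' : e ∘ e = e := hee
  -- M = M ∘ h
  have hD : (fun m => m ∘ h) '' M = M := by
    apply hMin
    · rintro _ ⟨m, hm, rfl⟩
      exact hMabs m (hMS hm) h hhM
    · refine ⟨⟨_, ⟨h, hhM, rfl⟩⟩, ?_, ?_⟩
      · rintro _ ⟨m, hm, rfl⟩
        exact hScomp m (hMS hm) h hhS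
      · rintro s hs _ ⟨m, hm, rfl⟩
        exact ⟨s ∘ m, hMabs s hs m hm, rfl⟩
  obtain ⟨m, hm, hmh⟩ : ∃ m ∈ M, m ∘ h = e := by
    have := heM
    rw [← hD] at this
    obtain ⟨m, hm, hmh⟩ := this
    exact ⟨m, hm, hmh⟩
  set m2 : X → X := e ∘ m with hm2_def
  have hm2M : m2 ∈ M := hMabs e (hMS heM) m hm
  have hm2h : m2 ∘ h = e := by
    show (e ∘ m) ∘ h = e
    rw [Function.comp_assoc, hmh, hee']
  have hem2 : e ∘ m2 = m2 := by
    show e ∘ (e ∘ m) = e ∘ m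
    rw [← Function.comp_assoc, hee']
  refine ⟨h ∘ m2, hMabs h hhS m2 hm2M, ?_, ?_⟩
  · show (h ∘ m2) ∘ (h ∘ m2) = h ∘ m2
    calc (h ∘ m2) ∘ (h ∘ m2) = h ∘ (m2 ∘ h) ∘ m2 := rfl
      _ = h ∘ m2 := by
          rw [hm2h]
          show h ∘ (e ∘ m2) = h ∘ m2
          rw [hem2]
  · rintro _ ⟨x, rfl⟩
    exact ⟨m0 (m2 x), rfl⟩
end

section
/- Let (T, ≤) be a meet-tree, i.e. a partially ordered set in which every set {x : x ≤ a} is linearly ordered and every pair {a,b} has a greatest lower bound a ∧ b. Define B(a,b,c) to hold iff ((a∧c) ≤ b ≤ a) or ((a∧c) ≤ b ≤ c), and for a,b ∈ T let [a,b] = {x : B(a,x,b)}. Then for any a, b, c ∈ T, the intersection [a,b] ∩ [b,c] ∩ [a,c] contains exactly one point. -/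
/-- The betweenness relation of a meet-tree: `b` lies on the path from `a` to `c`. -/
def TreeBtw {T : Type*} [SemilatticeInf T] (a b c : T) : Prop :=
  (a ⊓ c ≤ b ∧ b ≤ a) ∨ (a ⊓ c ≤ b ∧ b ≤ c)

lemma TreeBtw.symm_iff {T : Type*} [SemilatticeInf T] (a m c : T) :
    TreeBtw a m c ↔ TreeBtw c m a := by
  unfold TreeBtw
  rw [inf_comm]
  tauto

lemma key {T : Type*} [SemilatticeInf T] (a b c : T)
    (h1 : a ⊓ b ≤ b ⊓ c) (h2 : a ⊓ c ≤ b ⊓ c) :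
    ∃! m : T, TreeBtw a m b ∧ TreeBtw b m c ∧ TreeBtw a m c := by
  refine ⟨b ⊓ c, ⟨?_, ?_, ?_⟩, ?_⟩
  · exact Or.inr ⟨h1, inf_le_left⟩
  · exact Or.inl ⟨le_refl _, inf_le_left⟩
  · exact Or.inr ⟨h2, inf_le_right⟩
  · rintro m ⟨h₁, h₂, h₃⟩
    have hy : b ⊓ c ≤ m := by rcases h₂ with ⟨h, _⟩ | ⟨h, _⟩ <;> exact h
    have hx : a ⊓ b ≤ m := by rcases h₁ with ⟨h, _⟩ | ⟨h, _⟩ <;> exact h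
    have hz : a ⊓ c ≤ m := by rcases h₃ with ⟨h, _⟩ | ⟨h, _⟩ <;> exact h
    have hd1 : m ≤ a ∨ m ≤ b := by rcases h₁ with ⟨_, h⟩ | ⟨_, h⟩ <;> tauto
    have hd2 : m ≤ b ∨ m ≤ c := by rcases h₂ with ⟨_, h⟩ | ⟨_, h⟩ <;> tauto
    have hd3 : m ≤ a ∨ m ≤ c := by rcases h₃ with ⟨_, h⟩ | ⟨_, h⟩ <;> tauto
    rcases hd2 with hb | hc
    · rcases hd3 with ha | hc
      · exact le_antisymm (le_inf_iff.mpr ⟨ha, hb⟩ |>.trans h1) hy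
      · exact le_antisymm (le_inf hb hc) hy
    · rcases hd1 with ha | hb
      · exact le_antisymm (le_inf_iff.mpr ⟨ha, hc⟩ |>.trans h2) hy
      · exact le_antisymm (le_inf hb hc) hy

theorem stmt14 {T : Type*} [SemilatticeInf T]
    (hchain : ∀ a b c : T, b ≤ a → c ≤ a → b ≤ c ∨ c ≤ b)
    (a b c : T) :
    ∃! m : T, TreeBtw a m b ∧ TreeBtw b m c ∧ TreeBtw a m c := by
  have hxy := hchain b (a ⊓ b) (b ⊓ c) inf_le_right inf_le_left
  rcases hxy with hxy | hyx
  · have hzy := hchain c (a ⊓ c) (b ⊓ c) inf_le_right inf_le_right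
    rcases hzy with hzy | hyz
    · exact key a b c hxy hzy
    · -- median is a ⊓ c
      obtain ⟨m, ⟨k1, k2, k3⟩, hu⟩ := key b c a
        (by rw [inf_comm c a]; exact hyz)
        (by rw [inf_comm c a, inf_comm b a]; exact hxy.trans hyz)
      refine ⟨m, ⟨(TreeBtw.symm_iff b m a).mp k3, k1, (TreeBtw.symm_iff c m a).mp k2⟩, ?_⟩
      rintro m' ⟨p1, p2, p3⟩
      exact hu m' ⟨p2, (TreeBtw.symm_iff a m' c).mp p3, (TreeBtw.symm_iff a m' b).mp p1⟩
  · have hyz : b ⊓ c ≤ a ⊓ c := le_inf (hyx.trans inf_le_left) inf_le_right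
    have hxz := hchain a (a ⊓ b) (a ⊓ c) inf_le_left inf_le_left
    rcases hxz with hxz | hzx
    · obtain ⟨m, ⟨k1, k2, k3⟩, hu⟩ := key b c a
        (by rw [inf_comm c a]; exact hyz)
        (by rw [inf_comm c a, inf_comm b a]; exact hxz)
      refine ⟨m, ⟨(TreeBtw.symm_iff b m a).mp k3, k1, (TreeBtw.symm_iff c m a).mp k2⟩, ?_⟩
      rintro m' ⟨p1, p2, p3⟩
      exact hu m' ⟨p2, (TreeBtw.symm_iff a m' c).mp p3, (TreeBtw.symm_iff a m' b).mp p1⟩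
    · -- median is a ⊓ b
      obtain ⟨m, ⟨k1, k2, k3⟩, hu⟩ := key c a b
        (by rw [inf_comm c a]; exact hzx)
        (by rw [inf_comm c b]; exact hyx)
      refine ⟨m, ⟨k2, (TreeBtw.symm_iff c m b).mp ?_, (TreeBtw.symm_iff c m a).mp k1⟩, ?_⟩
      · exact k3
      rintro m' ⟨p1, p2, p3⟩
      exact hu m' ⟨(TreeBtw.symm_iff a m' c).mp p3, p1, (TreeBtw.symm_iff b m' c).mp p2⟩
end

section
/- Let (T, ≤, ∧) be a meet-tree, B its betweenness relation, and ⋀(a,b,c) the median (the unique element of [a,b] ∩ [b,c] ∩ [a,c]). Then for any finite subset T₀ ⊆ T, the set T₁ = {⋀(c,d,e) : c,d,e ∈ T₀} contains T₀, is closed under ⋀ (i.e. ⋀(x,y,z) ∈ T₁ for all x,y,z ∈ T₁), and has cardinality at most |T₀|³. In particular, the substructure of (T, ⋀) generated by T₀ has at most |T₀|³ elements. -/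
section Aux

variable {T : Type*} [SemilatticeInf T]

/-- All pairwise meets lie below the median. -/
lemma aux_le {med : T → T → T → T}
    (hmed : ∀ a b c : T,
      TreeBtw a (med a b c) b ∧ TreeBtw b (med a b c) c ∧ TreeBtw a (med a b c) c)
    (a b c : T) : a ⊓ b ≤ med a b c ∧ b ⊓ c ≤ med a b c ∧ a ⊓ c ≤ med a b c := by
  obtain ⟨h1, h2, h3⟩ := hmed a b c
  unfold TreeBtw at h1 h2 h3
  exact ⟨by tauto, by tauto, by tauto⟩

/-- The median is one of the three pairwise meets. -/
lemma aux_pig {med : T → T → T → T}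
    (hmed : ∀ a b c : T,
      TreeBtw a (med a b c) b ∧ TreeBtw b (med a b c) c ∧ TreeBtw a (med a b c) c)
    (a b c : T) : med a b c = a ⊓ b ∨ med a b c = b ⊓ c ∨ med a b c = a ⊓ c := by
  obtain ⟨l1, l2, l3⟩ := aux_le hmed a b c
  obtain ⟨h1, h2, h3⟩ := hmed a b c
  unfold TreeBtw at h1 h2 h3
  have d1 : med a b c ≤ a ∨ med a b c ≤ b := by tauto
  have d2 : med a b c ≤ b ∨ med a b c ≤ c := by tauto
  have d3 : med a b c ≤ a ∨ med a b c ≤ c := by tauto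
  have key : (med a b c ≤ a ∧ med a b c ≤ b) ∨ (med a b c ≤ b ∧ med a b c ≤ c) ∨
      (med a b c ≤ a ∧ med a b c ≤ c) := by tauto
  rcases key with ⟨ha, hb⟩ | ⟨hb, hc⟩ | ⟨ha, hc⟩
  · exact Or.inl (le_antisymm (le_inf ha hb) l1)
  · exact Or.inr (Or.inl (le_antisymm (le_inf hb hc) l2))
  · exact Or.inr (Or.inr (le_antisymm (le_inf ha hc) l3))

/-- Characterization: if all pairwise meets are ≤ m and m equals one of them,
then m is the median. -/
lemma aux_eq {med : T → T → T → T}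
    (hmed : ∀ a b c : T,
      TreeBtw a (med a b c) b ∧ TreeBtw b (med a b c) c ∧ TreeBtw a (med a b c) c)
    (a b c m : T) (h1 : a ⊓ b ≤ m) (h2 : b ⊓ c ≤ m) (h3 : a ⊓ c ≤ m)
    (hm : m = a ⊓ b ∨ m = b ⊓ c ∨ m = a ⊓ c) : med a b c = m := by
  obtain ⟨l1, l2, l3⟩ := aux_le hmed a b c
  have hmn : m ≤ med a b c := by rcases hm with h | h | h <;> rw [h] <;> assumption
  have hnm : med a b c ≤ m := by
    rcases aux_pig hmed a b c with h | h | h <;> rw [h] <;> assumption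
  exact le_antisymm hnm hmn

/-- Key combinatorial step: witnesses in `T₀` for the median of three elements
of `T₁`, in the case `m = x ⊓ y` and `m ∉ {x, y, z}`. -/
lemma aux_key (hchain : ∀ a b c : T, b ≤ a → c ≤ a → b ≤ c ∨ c ≤ b)
    {x y z a b c c' m : T}
    (hxa : x ≤ a) (hyb : y ≤ b) (hz : z = c ⊓ c')
    (hm : m = x ⊓ y) (hxz : x ⊓ z ≤ m) (hyz : y ⊓ z ≤ m)
    (hnx : m ≠ x) (hny : m ≠ y) (hnz : m ≠ z) :
    ∃ e, (e = c ∨ e = c') ∧ a ⊓ b = m ∧ a ⊓ e ≤ m ∧ b ⊓ e ≤ m := by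
  have hmx : m ≤ x := hm ▸ inf_le_left
  have hmy : m ≤ y := hm ▸ inf_le_right
  -- a ⊓ b = m
  have hab : a ⊓ b = m := by
    have hge : m ≤ a ⊓ b := le_inf (hmx.trans hxa) (hmy.trans hyb)
    have hle : a ⊓ b ≤ m := by
      rcases hchain a (a ⊓ b) x inf_le_left hxa with h | h
      · rcases hchain b (a ⊓ b) y inf_le_right hyb with h' | h'
        · calc a ⊓ b ≤ x ⊓ y := le_inf h h'
            _ = m := hm.symm
        · -- y ≤ a ⊓ b ≤ x, so m = x ⊓ y = y
          exact absurd (hm.trans (inf_eq_right.mpr (h'.trans h))) hny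
      · -- x ≤ a ⊓ b ≤ b, so x, y comparable below b
        rcases hchain b x y (h.trans inf_le_right) hyb with h' | h'
        · exact absurd (hm.trans (inf_eq_left.mpr h')) hnx
        · exact absurd (hm.trans (inf_eq_right.mpr h')) hny
    exact le_antisymm hle hge
  by_cases hc : m ≤ c
  · by_cases hc' : m ≤ c'
    · -- m ≤ z; "case A": use e = c, with z ≤ c
      have hmz : m ≤ z := hz ▸ le_inf hc hc'
      have hzc : z ≤ c := hz ▸ inf_le_left
      have case_a : ∀ p q : T, p ≤ q → m ≤ p → m ≠ p → p ⊓ z ≤ m → q ⊓ c ≤ m := by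
        intro p q hpq hmp hmnp hpz
        rcases hchain c (q ⊓ c) z inf_le_right hzc with h | h
        · -- q ⊓ c ≤ z
          rcases hchain q (q ⊓ c) p inf_le_left hpq with h' | h'
          · exact le_trans (le_inf h' h) hpz
          · -- p ≤ q ⊓ c ≤ z
            have : p ⊓ z = p := inf_eq_left.mpr (h'.trans h)
            exact absurd (le_antisymm hmp (this ▸ hpz)) hmnp
        · -- z ≤ q ⊓ c, so z ≤ q; p, z comparable below q
          rcases hchain q z p (h.trans inf_le_left) hpq with h' | h'
          · -- z ≤ p, so p ⊓ z = z ≤ m, with m ≤ z gives m = z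
            have : p ⊓ z = z := inf_eq_right.mpr h'
            exact absurd (le_antisymm hmz (this ▸ hpz)) hnz
          · have : p ⊓ z = p := inf_eq_left.mpr h'
            exact absurd (le_antisymm hmp (this ▸ hpz)) hmnp
      exact ⟨c, Or.inl rfl, hab, case_a x a hxa hmx hnx hxz, case_a y b hyb hmy hny hyz⟩
    · -- ¬ (m ≤ c'): use e = c'
      have ha : a ⊓ c' ≤ m := by
        rcases hchain a (a ⊓ c') m inf_le_left (hmx.trans hxa) with h | h
        · exact h
        · exact absurd (h.trans inf_le_right) hc'
      have hb : b ⊓ c' ≤ m := by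
        rcases hchain b (b ⊓ c') m inf_le_left (hmy.trans hyb) with h | h
        · exact h
        · exact absurd (h.trans inf_le_right) hc'
      exact ⟨c', Or.inr rfl, hab, ha, hb⟩
  · -- ¬ (m ≤ c): use e = c
    have ha : a ⊓ c ≤ m := by
      rcases hchain a (a ⊓ c) m inf_le_left (hmx.trans hxa) with h | h
      · exact h
      · exact absurd (h.trans inf_le_right) hc
    have hb : b ⊓ c ≤ m := by
      rcases hchain b (b ⊓ c) m inf_le_left (hmy.trans hyb) with h | h
      · exact h
      · exact absurd (h.trans inf_le_right) hc
    exact ⟨c, Or.inl rfl, hab, ha, hb⟩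

end Aux

theorem stmt16 {T : Type*} [SemilatticeInf T] [DecidableEq T]
    (hchain : ∀ a b c : T, b ≤ a → c ≤ a → b ≤ c ∨ c ≤ b)
    (med : T → T → T → T)
    (hmed : ∀ a b c : T,
      TreeBtw a (med a b c) b ∧ TreeBtw b (med a b c) c ∧ TreeBtw a (med a b c) c)
    (T₀ T₁ : Finset T)
    (hT₁ : T₁ = Finset.image (fun p : T × T × T => med p.1 p.2.1 p.2.2)
      (T₀ ×ˢ T₀ ×ˢ T₀)) :
    T₀ ⊆ T₁ ∧
    (∀ x ∈ T₁, ∀ y ∈ T₁, ∀ z ∈ T₁, med x y z ∈ T₁) ∧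
    T₁.card ≤ T₀.card ^ 3 := by
  have hmem : ∀ t : T, t ∈ T₁ ↔ ∃ a ∈ T₀, ∃ b ∈ T₀, ∃ c ∈ T₀, med a b c = t := by
    intro t
    subst hT₁
    simp only [Finset.mem_image, Finset.mem_product, Prod.exists]
    constructor
    · rintro ⟨a, b, c, ⟨ha, hb, hc⟩, h⟩
      exact ⟨a, ha, b, hb, c, hc, h⟩
    · rintro ⟨a, ha, b, hb, c, hc, h⟩
      exact ⟨a, b, c, ⟨ha, hb, hc⟩, h⟩
  -- T₀ ⊆ T₁
  have hsub : T₀ ⊆ T₁ := by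
    intro t ht
    rw [hmem]
    refine ⟨t, ht, t, ht, t, ht, ?_⟩
    exact aux_eq hmed t t t t (by simp) (by simp) (by simp) (by simp)
  -- every element of T₁ is a meet of two elements of T₀
  have hdec : ∀ t ∈ T₁, ∃ p ∈ T₀, ∃ q ∈ T₀, t = p ⊓ q := by
    intro t ht
    rw [hmem] at ht
    obtain ⟨a, ha, b, hb, c, hc, h⟩ := ht
    rcases aux_pig hmed a b c with h' | h' | h'
    · exact ⟨a, ha, b, hb, h ▸ h'⟩
    · exact ⟨b, hb, c, hc, h ▸ h'⟩
    · exact ⟨a, ha, c, hc, h ▸ h'⟩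
  -- main closure step, symmetric form
  have main : ∀ x ∈ T₁, ∀ y ∈ T₁, ∀ z ∈ T₁, ∀ m : T,
      m = x ⊓ y → x ⊓ z ≤ m → y ⊓ z ≤ m → m ∈ T₁ := by
    intro x hx y hy z hz m hm hxz hyz
    by_cases hnx : m = x
    · exact hnx ▸ hx
    by_cases hny : m = y
    · exact hny ▸ hy
    by_cases hnz : m = z
    · exact hnz ▸ hz
    obtain ⟨p, hp, q, hq, hxd⟩ := hdec x hx
    obtain ⟨p', hp', q', hq', hyd⟩ := hdec y hy
    obtain ⟨c, hc, c', hc', hzd⟩ := hdec z hz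
    have hxa : x ≤ p := hxd ▸ inf_le_left
    have hyb : y ≤ p' := hyd ▸ inf_le_left
    obtain ⟨e, he, hab, h1, h2⟩ :=
      aux_key hchain hxa hyb hzd hm hxz hyz hnx hny hnz
    have heT : e ∈ T₀ := by rcases he with h | h <;> subst h <;> assumption
    rw [hmem]
    refine ⟨p, hp, p', hp', e, heT, ?_⟩
    exact aux_eq hmed p p' e m (le_of_eq hab) h2 h1 (Or.inl hab.symm)
  refine ⟨hsub, ?_, ?_⟩
  · -- closure
    intro x hx y hy z hz
    obtain ⟨l1, l2, l3⟩ := aux_le hmed x y z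
    rcases aux_pig hmed x y z with h | h | h
    · exact main x hx y hy z hz _ h l3 l2
    · exact main y hy z hz x hx _ h (inf_comm x y ▸ l1) (inf_comm x z ▸ l3)
    · exact main x hx z hz y hy _ h (inf_comm x y ▸ l1) (inf_comm y z ▸ l2)
  · -- cardinality
    subst hT₁
    calc (Finset.image (fun p : T × T × T => med p.1 p.2.1 p.2.2)
          (T₀ ×ˢ T₀ ×ˢ T₀)).card
        ≤ (T₀ ×ˢ T₀ ×ˢ T₀).card := Finset.card_image_le
      _ = T₀.card ^ 3 := by simp [Finset.card_product]; ring
end
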